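/- Let a₁,a₂,a₃,a₄ be nonzero integers with α = a₁a₂a₃a₄ and ψ₁(x)=Σaᵢxᵢ², ψ̃₁(w)=Σᵢ(α/aᵢ)wᵢ². For every odd prime p with p ∤ 2α, every integer r ≥ 1 and every w∈ℤ⁴, S_{1,p^r}(w) = χ_p(α)^r · p^{2r} · c_{p^r}(ψ̃₁(w)), where S_{1,c}(w) = Σ_{a=1, gcd(a,c)=1}^{c} Σ_{k∈{0,…,c−1}⁴} e((a·ψ₁(k) + w·k)/c), c_m(n) = Σ_{a=1, gcd(a,m)=1}^{m} e(an/m) denotes the Ramanujan sum, χ_p is the Legendre symbol modulo p, and e(t)=exp(2πit). -/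

import Mathlib

/-- `ψ(c, x) = c₁x₁² + c₂x₂² + c₃x₃² + c₄x₄²` for a diagonal quaternary quadratic form. -/
def psi (c : Fin 4 → ℤ) (x : Fin 4 → ℤ) : ℤ := ∑ i, c i * x i ^ 2

/-- The adjoint form `ψ̃₁(w) = Σᵢ (α/aᵢ)·wᵢ²` where `α = a₁a₂a₃a₄`. -/
def psit (a : Fin 4 → ℤ) (w : Fin 4 → ℤ) : ℤ := ∑ i, ((∏ j, a j) / a i) * w i ^ 2

/-- The complete exponential sum
`S_{1,c}(w) = Σ*_{a mod c} Σ_{k mod c} e((aψ₁(k)+w·k)/c)` with `e(t) = exp(2πit)`. -/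
noncomputable def S1 (a : Fin 4 → ℤ) (c : ℕ) (w : Fin 4 → ℤ) : ℂ :=
  ∑ x ∈ (Finset.range c).filter (fun x => Nat.Coprime x c),
    ∑ k ∈ Fintype.piFinset fun _ : Fin 4 => Finset.range c,
      Complex.exp (2 * (Real.pi : ℂ) * Complex.I *
        (((x : ℂ) * ((psi a (fun i => (k i : ℤ)) : ℤ) : ℂ) + ∑ i, (w i : ℂ) * (k i : ℂ))
          / (c : ℂ)))

/-- The Ramanujan sum `c_m(n) = Σ*_{a mod m} e(an/m)`. -/
noncomputable def ramanujanSum (m : ℕ) (n : ℤ) : ℂ :=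
  ∑ x ∈ (Finset.range m).filter (fun x => Nat.Coprime x m),
    Complex.exp (2 * (Real.pi : ℂ) * Complex.I * ((x : ℂ) * (n : ℂ) / (m : ℂ)))

/-!
Fix a unit `x` modulo `p ^ r`. The sum over `k` factors over the four coordinates, and completing
the square (`2 x aᵢ` is a unit) turns the `i`-th factor into `e(-(4 x aᵢ)⁻¹ wᵢ² / p ^ r)` times
the quadratic Gauss sum `G(x aᵢ; p ^ r)`, where `G(b; N) = Σₜ e(b t² / N)`. Since
`aᵢ⁻¹ = α⁻¹ (α / aᵢ)`, the four phases multiply to `e(-(4 α x)⁻¹ ψ̃₁(w) / p ^ r)`.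
For `p ∤ 2b` one has `G(b; p ^ (s + 2)) = p G(b; p ^ s)` and `G(b; p) = χ_p(b) g` with `g⁴ = p²`,
so the product of the four Gauss sums is `χ_p(α) ^ r p ^ (2 r)`, independent of `x`. Finally
`x ↦ -(4 α x)⁻¹` permutes the units modulo `p ^ r`, which leaves the Ramanujan sum.
-/

open Finset

namespace AddChar

lemma map_sum_eq_prod {A M ι : Type*} [AddCommMonoid A] [CommMonoid M] (ψ : AddChar A M)
    (s : Finset ι) (f : ι → A) : ψ (∑ i ∈ s, f i) = ∏ i ∈ s, ψ (f i) := by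
  induction s using Finset.cons_induction with
  | empty => simp
  | cons i s hi ih => rw [sum_cons, prod_cons, map_add_eq_mul, ih]

lemma sum_mul_sq_add {R R' : Type*} [CommRing R] [Fintype R] [CommRing R'] (ψ : AddChar R R')
    {b v m : R} (h : 2 * b * m = v) :
    ∑ t, ψ (b * t ^ 2 + v * t) = ψ (-(b * m ^ 2)) * ∑ t, ψ (b * t ^ 2) := by
  rw [mul_sum, ← (Equiv.subRight m).sum_comp]
  refine sum_congr rfl fun t _ => ?_
  rw [← map_add_eq_mul, Equiv.subRight_apply]
  congr 1
  linear_combination (m - t) * h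

lemma prod_sum_mul_sq_add_eq {R R' ι : Type*} [CommRing R] [Fintype R] [CommRing R']
    [Fintype ι] (ψ : AddChar R R') {x α y : R} {a a' w : ι → R} (ha : ∀ i, a i * a' i = α)
    (hy : 4 * α * x * y = 1) :
    ∏ i, ∑ t, ψ (x * a i * t ^ 2 + w i * t) =
      ψ (-(y * ∑ i, a' i * w i ^ 2)) * ∏ i, ∑ t, ψ (x * a i * t ^ 2) := by
  -- `y * (2 * a' i * w i)` is `w i / (2 * x * a i)`, as `y = (4 * α * x)⁻¹` and `a' i = α / a i`.
  have hm : ∀ i, 2 * (x * a i) * (y * (2 * a' i * w i)) = w i := fun i => by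
    linear_combination (4 * x * y * w i) * ha i + w i * hy
  rw [prod_congr rfl fun i _ => sum_mul_sq_add ψ (hm i), prod_mul_distrib, ← map_sum_eq_prod,
    mul_sum, ← sum_neg_distrib]
  congr 2
  refine sum_congr rfl fun i _ => ?_
  linear_combination (-(4 * x * y ^ 2 * a' i * w i ^ 2)) * ha i - (y * a' i * w i ^ 2) * hy

end AddChar

lemma Finset.sum_range_mul_eq_sum_sum {M : Type*} [AddCommMonoid M] (f : ℕ → M) (m n : ℕ) :
    ∑ k ∈ range (m * n), f k = ∑ i ∈ range n, ∑ j ∈ range m, f (m * i + j) := by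
  induction n with
  | zero => simp
  | succ n ih => rw [mul_add_one, sum_range_add, ih, sum_range_succ]

namespace ZMod

variable {N : ℕ} [NeZero N]

lemma sum_range_natCast {M : Type*} [AddCommMonoid M] (f : ZMod N → M) :
    ∑ k ∈ range N, f k = ∑ t, f t :=
  sum_nbij' (↑) val (fun _ _ => mem_univ _) (fun t _ => mem_range.mpr (val_lt t))
    (fun _ hk => val_cast_of_lt (mem_range.mp hk)) (fun t _ => natCast_zmod_val t)
    (fun _ _ => rfl)

lemma stdAddChar_intCast_mul_of_eq_mul {M d : ℕ} [NeZero M] (h : N = d * M) (x : ℤ) :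
    stdAddChar ((d * x : ℤ) : ZMod N) = stdAddChar (x : ZMod M) := by
  have hd : (d : ℂ) ≠ 0 := by
    have := NeZero.ne N
    rw [h] at this
    exact_mod_cast left_ne_zero_of_mul this
  have hM : (M : ℂ) ≠ 0 := NeZero.ne _
  rw [stdAddChar_coe, stdAddChar_coe, h]
  congr 1
  push_cast
  field_simp

lemma sum_range_stdAddChar_intCast_mul (c : ℤ) :
    ∑ v ∈ range N, stdAddChar ((c * v : ℤ) : ZMod N) = if (N : ℤ) ∣ c then (N : ℂ) else 0 := by
  push_cast
  simp_rw [mul_comm (c : ZMod N)]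
  rw [sum_range_natCast (fun t => stdAddChar (t * (c : ZMod N))),
    AddChar.sum_mulShift _ (isPrimitive_stdAddChar N)]
  simp [intCast_zmod_eq_zero_iff_dvd]

lemma sum_coprime_eq_sum_units {M : Type*} [AddCommMonoid M] (f : ZMod N → M) :
    ∑ x ∈ range N with x.Coprime N, f x = ∑ u : (ZMod N)ˣ, f u := by
  symm
  refine sum_bij (fun u _ => (u : ZMod N).val)
    (fun u _ => mem_filter.mpr ⟨mem_range.mpr (val_lt _), val_coe_unit_coprime u⟩)
    (fun u _ v _ h => Units.ext (val_injective N h)) (fun x hx => ?_)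
    (fun u _ => by rw [natCast_zmod_val])
  obtain ⟨hxN, hx⟩ := mem_filter.mp hx
  exact ⟨unitOfCoprime x hx, mem_univ _, by
    rw [coe_unitOfCoprime, val_cast_of_lt (mem_range.mp hxN)]⟩

lemma isUnit_intCast_prime_pow {p : ℕ} (hp : p.Prime) (r : ℕ) {z : ℤ} (hz : ¬ (p : ℤ) ∣ z) :
    IsUnit (z : ZMod (p ^ r)) := by
  refine (coe_int_isUnit_iff_isCoprime _ _).mpr ?_
  rw [Nat.cast_pow]
  exact ((Nat.prime_iff_prime_int.mp hp).coprime_iff_not_dvd.mpr hz).pow_left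

end ZMod

lemma not_dvd_four_mul_of_not_dvd_two_mul {p : ℕ} (hp : p.Prime) {z : ℤ}
    (hz : ¬ (p : ℤ) ∣ 2 * z) : ¬ (p : ℤ) ∣ 4 * z := by
  rw [show (4 : ℤ) * z = 2 * (2 * z) by ring, (Nat.prime_iff_prime_int.mp hp).dvd_mul, not_or]
  exact ⟨fun h => hz (dvd_mul_of_dvd_left h z), hz⟩

section FiniteField

variable {F : Type*} [Field F] [Fintype F] [DecidableEq F] {ψ : AddChar F ℂ}

lemma sum_mul_sq_eq_quadraticChar_mul_gaussSum (hF : ringChar F ≠ 2) (hψ : ψ.IsPrimitive)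
    {b : F} (hb : b ≠ 0) :
    ∑ t, ψ (b * t ^ 2) =
      quadraticChar F b * gaussSum ((quadraticChar F).ringHomComp (Int.castRingHom ℂ)) ψ := by
  set χ := (quadraticChar F).ringHomComp (Int.castRingHom ℂ)
  have hχ : χ⁻¹ = χ := ((quadraticChar_isQuadratic F).comp _).inv
  have hsqrts : ∀ s : F, (#{t | t ^ 2 = s} : ℂ) = χ s + 1 := fun s => by
    simpa [χ, Set.toFinset_ofPred] using
      congrArg (Int.cast (R := ℂ)) (quadraticChar_card_sqrts hF s)
  calc ∑ t, ψ (b * t ^ 2)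
      = ∑ s, (#{t | t ^ 2 = s} : ℂ) * ψ (b * s) := by
        rw [← sum_fiberwise univ (· ^ 2)]
        refine sum_congr rfl fun s _ => ?_
        rw [sum_congr rfl fun t ht => by rw [(mem_filter.mp ht).2], sum_const, nsmul_eq_mul]
    _ = gaussSum χ (ψ.mulShift b) + ∑ s, ψ (s * b) := by
        rw [gaussSum, ← sum_add_distrib]
        refine sum_congr rfl fun s _ => ?_
        rw [hsqrts, AddChar.mulShift_apply, mul_comm s b]
        ring
    _ = quadraticChar F b * gaussSum χ ψ := by
        rw [AddChar.sum_mulShift b hψ, if_neg hb, Nat.cast_zero, add_zero,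
          show b = (Units.mk0 b hb : F) from rfl, gaussSum_mulShift_eq, hχ]
        rfl

lemma gaussSum_quadraticChar_pow_four (hF : ringChar F ≠ 2) (hψ : ψ.IsPrimitive) :
    gaussSum ((quadraticChar F).ringHomComp (Int.castRingHom ℂ)) ψ ^ 4 =
      (Fintype.card F : ℂ) ^ 2 := by
  have hχ := (quadraticChar_isQuadratic F).comp (Int.castRingHom ℂ)
  rw [show 4 = 2 * 2 from rfl, pow_mul, gaussSum_sq _ hχ hψ, mul_pow, ← map_pow, neg_one_sq,
    map_one, one_mul]
  exact (MulChar.ringHomComp_ne_one_iff (RingHom.injective_int _)).mpr (quadraticChar_ne_one hF)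

end FiniteField

noncomputable def quadGaussSum (N : ℕ) [NeZero N] (b : ZMod N) : ℂ :=
  ∑ t : ZMod N, ZMod.stdAddChar (b * t ^ 2)

lemma quadGaussSum_intCast_eq_sum_range (N : ℕ) [NeZero N] (b : ℤ) :
    quadGaussSum N b = ∑ k ∈ range N, ZMod.stdAddChar ((b * k ^ 2 : ℤ) : ZMod N) := by
  push_cast
  exact (ZMod.sum_range_natCast (fun t => ZMod.stdAddChar ((b : ZMod N) * t ^ 2))).symm

open ZMod in
lemma quadGaussSum_of_eq_sq_mul {p M N : ℕ} [NeZero M] [NeZero N] (hp : p.Prime)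
    (hN : N = p ^ 2 * M) {b : ℤ} (hb : ¬ (p : ℤ) ∣ 2 * b) :
    quadGaussSum N b = p * quadGaussSum M b := by
  have : NeZero p := ⟨hp.ne_zero⟩
  have hpz : Prime (p : ℤ) := Nat.prime_iff_prime_int.mp hp
  set P := p * M
  have hNP : N = P * p := by rw [hN]; ring
  have hP2 : (P : ZMod N) ^ 2 = 0 := by
    rw [← Nat.cast_pow, show P ^ 2 = N * M by rw [hN]; ring, Nat.cast_mul, natCast_self,
      zero_mul]
  have hdvd : ∀ u : ℕ, (p : ℤ) ∣ 2 * b * u ↔ p ∣ u := fun u => by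
    rw [hpz.dvd_mul, or_iff_right hb, Int.natCast_dvd_natCast]
  rw [quadGaussSum_intCast_eq_sum_range, quadGaussSum_intCast_eq_sum_range]
  -- Split `k = u + P * v`. As `P² ≡ 0 [MOD N]`, the sum over `v` is a character sum modulo `p`
  -- that kills every `u` prime to `p`; the surviving `u = p * i` bring the modulus down to `M`.
  calc ∑ k ∈ range N, stdAddChar ((b * k ^ 2 : ℤ) : ZMod N)
      = ∑ u ∈ range P, stdAddChar ((b * u ^ 2 : ℤ) : ZMod N) *
          ∑ v ∈ range p, stdAddChar ((2 * b * u * v : ℤ) : ZMod p) := by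
        rw [congrArg range hNP, sum_range_mul_eq_sum_sum, sum_comm]
        refine sum_congr rfl fun u _ => ?_
        rw [mul_sum]
        refine sum_congr rfl fun v _ => ?_
        rw [← stdAddChar_intCast_mul_of_eq_mul hNP, ← AddChar.map_add_eq_mul]
        congr 1
        push_cast
        linear_combination (b * (v : ZMod N) ^ 2) * hP2
    _ = ∑ u ∈ range P, stdAddChar ((b * u ^ 2 : ℤ) : ZMod N) * if p ∣ u then (p : ℂ) else 0 := by
        simp_rw [sum_range_stdAddChar_intCast_mul, hdvd]
    _ = ∑ i ∈ range M, stdAddChar ((b * (p * i : ℕ) ^ 2 : ℤ) : ZMod N) * p := by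
        rw [sum_range_mul_eq_sum_sum]
        refine sum_congr rfl fun i _ => ?_
        rw [sum_eq_single 0]
        · simp
        · intro j hj hj0
          rw [if_neg ((Nat.dvd_add_right (dvd_mul_right p i)).not.mpr
            (Nat.not_dvd_of_pos_of_lt (Nat.pos_of_ne_zero hj0) (mem_range.mp hj))), mul_zero]
        · intro h; exact absurd (mem_range.mpr hp.pos) h
    _ = p * ∑ i ∈ range M, stdAddChar ((b * i ^ 2 : ℤ) : ZMod M) := by
        rw [mul_sum]
        refine sum_congr rfl fun i _ => ?_
        rw [mul_comm, ← stdAddChar_intCast_mul_of_eq_mul (d := p ^ 2) hN]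
        push_cast
        ring_nf

section PrimePow

variable {p : ℕ} [Fact p.Prime]

lemma quadGaussSum_prime (hp2 : p ≠ 2) {b : ℤ} (hb : ¬ (p : ℤ) ∣ b) :
    quadGaussSum p b = legendreSym p b *
      gaussSum ((quadraticChar (ZMod p)).ringHomComp (Int.castRingHom ℂ)) ZMod.stdAddChar :=
  sum_mul_sq_eq_quadraticChar_mul_gaussSum (by rwa [ZMod.ringChar_zmod_n])
    (ZMod.isPrimitive_stdAddChar p) (by rwa [ne_eq, ZMod.intCast_zmod_eq_zero_iff_dvd])

lemma not_dvd_two_mul_of_ne_two (hp2 : p ≠ 2) {b : ℤ} (hb : ¬ (p : ℤ) ∣ b) :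
    ¬ (p : ℤ) ∣ 2 * b := by
  have hp := (Fact.out : p.Prime)
  rw [(Nat.prime_iff_prime_int.mp hp).dvd_mul, not_or]
  refine ⟨fun h => hp2 ?_, hb⟩
  exact (Nat.prime_dvd_prime_iff_eq hp Nat.prime_two).mp (by exact_mod_cast h)

lemma prod_quadGaussSum_prime_pow (hp2 : p ≠ 2) {b : Fin 4 → ℤ} (hb : ∀ i, ¬ (p : ℤ) ∣ b i)
    (r : ℕ) :
    ∏ i, quadGaussSum (p ^ r) (b i) = (legendreSym p (∏ i, b i) : ℂ) ^ r * p ^ (2 * r) := by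
  have hp := (Fact.out : p.Prime)
  -- Generalising the modulus lets us `subst` it instead of rewriting inside `ZMod (p ^ r)`.
  suffices ∀ N [NeZero N], N = p ^ r →
      ∏ i, quadGaussSum N (b i) = (legendreSym p (∏ i, b i) : ℂ) ^ r * p ^ (2 * r) from this _ rfl
  induction r using Nat.twoStepInduction with
  | zero =>
    intro N _ hN
    rw [pow_zero] at hN
    subst N
    simp [quadGaussSum, Subsingleton.elim _ (0 : ZMod 1)]
  | one =>
    intro N _ hN
    rw [pow_one] at hN
    subst N
    simp_rw [quadGaussSum_prime hp2 (hb _)]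
    rw [prod_mul_distrib, prod_const, card_univ, Fintype.card_fin,
      gaussSum_quadraticChar_pow_four (by rwa [ZMod.ringChar_zmod_n])
        (ZMod.isPrimitive_stdAddChar p), ZMod.card, ← legendreSym.hom_apply, map_prod]
    simp only [legendreSym.hom_apply]
    push_cast
    ring
  | more n ih _ =>
    intro N _ hN
    have hN' : N = p ^ 2 * p ^ n := by rw [hN]; ring
    simp_rw [quadGaussSum_of_eq_sq_mul hp hN' (not_dvd_two_mul_of_ne_two hp2 (hb _))]
    rw [prod_mul_distrib, prod_const, card_univ, Fintype.card_fin, ih _ rfl]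
    have hL : (legendreSym p (∏ i, b i) : ℂ) ^ 2 = 1 := by
      refine mod_cast legendreSym.sq_one p ?_
      rw [Int.cast_prod, prod_ne_zero_iff]
      exact fun i _ => by rw [ne_eq, ZMod.intCast_zmod_eq_zero_iff_dvd]; exact hb i
    linear_combination (-((p : ℂ) ^ 4 * (legendreSym p (∏ i, b i) : ℂ) ^ n * p ^ (2 * n))) * hL

end PrimePow

section Ramanujan

open ZMod

variable {N : ℕ} [NeZero N]

lemma ramanujanSum_eq_sum_units (n : ℤ) :
    ramanujanSum N n = ∑ u : (ZMod N)ˣ, stdAddChar ((u : ZMod N) * (n : ZMod N)) := by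
  rw [ramanujanSum, ← sum_coprime_eq_sum_units (fun t => stdAddChar (t * (n : ZMod N)))]
  refine sum_congr rfl fun x _ => ?_
  rw [show (x : ZMod N) * n = ((x * n : ℤ) : ZMod N) by push_cast; rfl, stdAddChar_coe]
  push_cast
  ring_nf

lemma sum_coprime_stdAddChar_neg_inv_mul_eq_ramanujanSum {C : ZMod N} (hC : IsUnit C) (n : ℤ) :
    ∑ x ∈ range N with x.Coprime N, stdAddChar (-(C * x)⁻¹ * (n : ZMod N)) =
      ramanujanSum N n := by
  obtain ⟨C, rfl⟩ := hC
  rw [ramanujanSum_eq_sum_units,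
    sum_coprime_eq_sum_units (fun t => stdAddChar (-((C : ZMod N) * t)⁻¹ * (n : ZMod N)))]
  refine Fintype.sum_equiv ((Equiv.mulLeft C).trans ((Equiv.inv _).trans (Equiv.neg _))) _ _
    fun u => ?_
  rw [← Units.val_mul, inv_coe_unit, ← Units.val_neg]
  rfl

end Ramanujan

lemma S1_eq_sum_prod (a : Fin 4 → ℤ) (N : ℕ) [NeZero N] (w : Fin 4 → ℤ) :
    S1 a N w = ∑ x ∈ range N with x.Coprime N,
      ∏ i, ∑ t : ZMod N,
        ZMod.stdAddChar ((x : ZMod N) * (a i : ZMod N) * t ^ 2 + (w i : ZMod N) * t) := by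
  refine sum_congr rfl fun x _ => ?_
  simp_rw [← ZMod.sum_range_natCast (N := N) (M := ℂ)]
  rw [prod_univ_sum]
  refine sum_congr rfl fun k _ => ?_
  rw [← AddChar.map_sum_eq_prod,
    show ∑ i, ((x : ZMod N) * (a i : ZMod N) * ((k i : ℕ) : ZMod N) ^ 2 +
        (w i : ZMod N) * (k i : ℕ)) =
        ((x * psi a (fun i => (k i : ℤ)) + ∑ i, w i * k i : ℤ) : ZMod N) by
        push_cast [psi]
        rw [mul_sum, ← sum_add_distrib]
        ring_nf,
    ZMod.stdAddChar_coe]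
  push_cast
  ring_nf

lemma prod_sum_stdAddChar_mul_sq_add {p : ℕ} [Fact p.Prime] {a : Fin 4 → ℤ}
    (hpα : ¬ (p : ℤ) ∣ 2 * ∏ i, a i) (r : ℕ) (w : Fin 4 → ℤ) {x : ℕ} (hx : ¬ p ∣ x) :
    ∏ i, ∑ t : ZMod (p ^ r),
        ZMod.stdAddChar ((x : ZMod (p ^ r)) * (a i : ZMod (p ^ r)) * t ^ 2 +
          (w i : ZMod (p ^ r)) * t) =
      ZMod.stdAddChar (-(((4 * ∏ i, a i : ℤ) : ZMod (p ^ r)) * x)⁻¹ * (psit a w : ZMod (p ^ r))) *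
        ((legendreSym p (∏ i, a i) : ℂ) ^ r * p ^ (2 * r)) := by
  have hp := (Fact.out : p.Prime)
  have hpz : Prime (p : ℤ) := Nat.prime_iff_prime_int.mp hp
  set α := ∏ i, a i with hα
  have hp2 : ¬ (p : ℤ) ∣ 2 := fun h => hpα (dvd_mul_of_dvd_left h α)
  have hxz : ¬ (p : ℤ) ∣ x := by exact_mod_cast hx
  have hpa : ∀ i, ¬ (p : ℤ) ∣ a i := fun i h =>
    hpα ((h.trans (dvd_prod_of_mem a (mem_univ i))).mul_left 2)
  have hcoef : ∀ i, ((a i : ℤ) : ZMod (p ^ r)) * ((α / a i : ℤ) : ZMod (p ^ r)) = α := fun i => by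
    rw [← Int.cast_mul, Int.mul_ediv_cancel' (dvd_prod_of_mem a (mem_univ i))]
  have hunit : IsUnit (((4 * α * x : ℤ)) : ZMod (p ^ r)) := ZMod.isUnit_intCast_prime_pow hp r
    (by rw [hpz.dvd_mul, not_or]; exact ⟨not_dvd_four_mul_of_not_dvd_two_mul hp hpα, hxz⟩)
  have hy : 4 * (α : ZMod (p ^ r)) * x * (((4 * α : ℤ) : ZMod (p ^ r)) * x)⁻¹ = 1 := by
    rw [← ZMod.mul_inv_of_unit _ hunit]
    push_cast
    ring
  rw [AddChar.prod_sum_mul_sq_add_eq _ hcoef hy, psit, ← hα, neg_mul]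
  push_cast
  congr 1
  have hG := prod_quadGaussSum_prime_pow (p := p) (fun h => hp2 (by rw [h]; norm_num))
    (fun i => by rw [hpz.dvd_mul, not_or]; exact ⟨hxz, hpa i⟩) r (b := fun i => x * a i)
  push_cast at hG
  have hx0 : ((x : ℤ) : ZMod p) ≠ 0 := by rwa [ne_eq, ZMod.intCast_zmod_eq_zero_iff_dvd]
  unfold quadGaussSum at hG
  rw [hG, prod_mul_distrib, prod_const, card_univ, Fintype.card_fin, legendreSym.mul,
    show (x : ℤ) ^ 4 = ((x : ℤ) ^ 2) ^ 2 by ring,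
    legendreSym.sq_one' p (by rw [Int.cast_pow]; exact pow_ne_zero 2 hx0), one_mul]

theorem stmt_13_general (a : Fin 4 → ℤ)
    (p : ℕ) (hp : Nat.Prime p)
    (hpα : ¬ ((p : ℤ) ∣ 2 * (a 0 * a 1 * a 2 * a 3)))
    (r : ℕ) (hr : 1 ≤ r) (w : Fin 4 → ℤ) :
    S1 a (p ^ r) w =
      ((jacobiSym (a 0 * a 1 * a 2 * a 3) p : ℂ)) ^ r * (p : ℂ) ^ (2 * r) *
        ramanujanSum (p ^ r) (psit a w) := by
  have := Fact.mk hp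
  rw [← Fin.prod_univ_four] at hpα ⊢
  have hx : ∀ x : ℕ, x.Coprime (p ^ r) → ¬ p ∣ x := fun x hx =>
    hp.coprime_iff_not_dvd.mp (hx.coprime_dvd_right (dvd_pow_self p (by omega))).symm
  rw [S1_eq_sum_prod, sum_congr rfl fun x hx' =>
      prod_sum_stdAddChar_mul_sq_add hpα r w (hx x (mem_filter.mp hx').2),
    ← sum_mul, sum_coprime_stdAddChar_neg_inv_mul_eq_ramanujanSum
      (ZMod.isUnit_intCast_prime_pow hp r (not_dvd_four_mul_of_not_dvd_two_mul hp hpα)),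
    jacobiSym.legendreSym.to_jacobiSym, mul_comm]

/-- Iwaniec–Munshi, Lemma 4.4: for odd primes `p ∤ 2α` and `r ≥ 1`,
`S_{1,p^r}(w) = χ_p(α)^r · p^{2r} · c_{p^r}(ψ̃₁(w))`. -/
theorem stmt_13 (a : Fin 4 → ℤ) (ha : ∀ i, a i ≠ 0)
    (p : ℕ) (hp : Nat.Prime p) (hodd : Odd p)
    (hpα : ¬ ((p : ℤ) ∣ 2 * (a 0 * a 1 * a 2 * a 3)))
    (r : ℕ) (hr : 1 ≤ r) (w : Fin 4 → ℤ) :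
    S1 a (p ^ r) w =
      ((jacobiSym (a 0 * a 1 * a 2 * a 3) p : ℂ)) ^ r * (p : ℂ) ^ (2 * r) *
        ramanujanSum (p ^ r) (psit a w) :=
  stmt_13_general a p hp hpα r hr w
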